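/- Let α, β ≥ -1/2 and m, n ≥ 0 be integers. There exists a constant C depending only on α, β, m, n such that for all θ, φ ∈ (0,π), u, v ∈ [-1,1] and t > 0: |∂_φ ∂_θ^n ∂_t^m Ψ^{α,β}(t, q(θ,φ,u,v))| ≤ C (t² + q(θ,φ,u,v))^{-(α+β+2)-(m+n)/2} when t ≤ 1, and |∂_φ ∂_θ^n ∂_t^m Ψ^{α,β}(t, q(θ,φ,u,v))| ≤ C exp(-t/4) when t > 1. -/

import Mathlib

open MeasureTheory Real Set

noncomputable section

/-- The Jacobi measure `μ_{α,β}^+` on `(0,π)`: density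
`(sin(θ/2))^(2α+1) (cos(θ/2))^(2β+1)` w.r.t. Lebesgue measure on `(0,π)`. -/
def jacobiMeasure (α β : ℝ) : Measure ℝ :=
  (volume.restrict (Ioo 0 π)).withDensity
    (fun θ => ENNReal.ofReal (Real.sin (θ / 2) ^ (2 * α + 1) * Real.cos (θ / 2) ^ (2 * β + 1)))

/-- The ball `B(θ,r) = (θ-r, θ+r) ∩ (0,π)`. -/
def jacobiBall (θ r : ℝ) : Set ℝ := Ioo (θ - r) (θ + r) ∩ Ioo 0 π

/-- The measure `Π_α` on `[-1,1]`. -/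
def PiMeasure (α : ℝ) : Measure ℝ :=
  if α = -(1 / 2) then (2 : ENNReal)⁻¹ • (Measure.dirac (-1) + Measure.dirac 1)
  else
    (volume.restrict (Icc (-1) 1)).withDensity
      (fun u => ENNReal.ofReal
        (Real.Gamma (α + 1) / (Real.sqrt π * Real.Gamma (α + 1 / 2)) * (1 - u ^ 2) ^ (α - 1 / 2)))

/-- `q(θ,φ,u,v) = 1 - u sin(θ/2) sin(φ/2) - v cos(θ/2) cos(φ/2)`. -/
def qfun (θ φ u v : ℝ) : ℝ :=
  1 - u * Real.sin (θ / 2) * Real.sin (φ / 2) - v * Real.cos (θ / 2) * Real.cos (φ / 2)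

/-- `Ψ^{α,β}(t,s) = sinh(t/2) / (cosh(t/2) - 1 + s)^(α+β+2)`. -/
def Psi (α β t s : ℝ) : ℝ :=
  Real.sinh (t / 2) / (Real.cosh (t / 2) - 1 + s) ^ (α + β + 2)

/-- The Jacobi-Poisson kernel `H_t^{α,β}(θ,φ)`. -/
def Hker (α β t θ φ : ℝ) : ℝ :=
  ((2 : ℝ) ^ (-(α + β + 2)) / (jacobiMeasure α β (Ioo 0 π)).toReal) * Real.sinh (t / 2) *
    ∫ u, ∫ v, 1 / (Real.cosh (t / 2) - 1 + qfun θ φ u v) ^ (α + β + 2)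
      ∂(PiMeasure β) ∂(PiMeasure α)

/-- The symmetrized kernel `H̃_t^{α,β}(θ,φ) = (1/4) sin θ sin φ H_t^{α+1,β+1}(θ,φ)`. -/
def Htilde (α β t θ φ : ℝ) : ℝ :=
  (1 / 4) * Real.sin θ * Real.sin φ * Hker (α + 1) (β + 1) t θ φ

end

/-!
Write `γ = α + β + 2` and `D = cosh (t / 2) - 1 + q`, so that `Ψ = sinh (t / 2) * D ^ (-γ)`.
Every derivative of `Ψ` in `t`, `θ`, `φ` is a finite sum of products of partial derivatives of
`q` with monomials `c * cosh (t / 2) ^ a * sinh (t / 2) ^ b * D ^ (-γ - k)`.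

For `t ≤ 1` one has `D ≍ t² + q`, while `sinh (t / 2)` and the first-order derivatives of `q` are
`O(√D)` (the latter because `(∂_θ q)² ≤ q`); with this bookkeeping each derivative costs at most a
factor `D ^ (-1/2)`.

For `t > 1`, `D ≳ exp (t / 2)`, so a monomial is `O(exp ((a + b - k - γ) t / 2))`. Derivatives in
`t` preserve `a + b - k`, and a derivative of `q` only enters a term by differentiating
`D ^ (-γ - k)` in `θ` or `φ`, which raises `k`. Hence after the `φ`-derivative `a + b ≤ k` in every
term, which then decays like `exp (-γ t / 2) ≤ exp (-t / 4)`.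
-/

namespace PsiBound

theorem rpow_le_rpow_sub_mul_rpow {x M X Y : ℝ} (hx : 0 < x) (hxM : x ≤ M) (hYX : Y ≤ X) :
    x ^ X ≤ M ^ (X - Y) * x ^ Y := by
  rw [← sub_add_cancel X Y, rpow_add hx, add_sub_cancel_right]
  gcongr

theorem sq_div_eight_le_cosh_half_sub_one {t : ℝ} (ht : 0 ≤ t) :
    t ^ 2 / 8 ≤ cosh (t / 2) - 1 := by
  have h : t / 4 ≤ sinh (t / 4) := self_le_sinh_iff.mpr (by positivity)
  rw [show t / 2 = 2 * (t / 4) by ring, cosh_two_mul, cosh_sq']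
  nlinarith

theorem cosh_half_le_three {t : ℝ} (ht : |t| ≤ 2) : cosh (t / 2) ≤ 3 := by
  calc cosh (t / 2) ≤ exp ((t / 2) ^ 2 / 2) := cosh_le_exp_half_sq _
    _ ≤ exp 1 := exp_le_exp.mpr (by nlinarith [sq_abs t, abs_nonneg t])
    _ ≤ 3 := exp_one_lt_three.le

theorem cosh_sub_one_eq_exp_mul_sq (x : ℝ) : cosh x - 1 = exp x * (1 - exp (-x)) ^ 2 / 2 := by
  rw [cosh_eq, exp_neg]
  field_simp
  ring

theorem rpow_neg_sub_succ (x γ : ℝ) (k : ℕ) : x ^ (-γ - ↑(k + 1)) = x ^ (-γ - k - 1) := by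
  push_cast; ring_nf

/-- `∂_θ^i ∂_φ^j q` when `(i, j) ≠ (0, 0)`; `qPartial 0 0 = q - 1`. -/
noncomputable def qPartial (i j : ℕ) (θ φ u v : ℝ) : ℝ :=
  -(1 / 2) ^ (i + j) * (u * sin (θ / 2 + i * (π / 2)) * sin (φ / 2 + j * (π / 2)) +
    v * cos (θ / 2 + i * (π / 2)) * cos (φ / 2 + j * (π / 2)))

def firstOrder (i j : ℕ) : ℤ := if i + j = 1 then 1 else 0

theorem qfun_eq_one_add_qPartial (θ φ u v : ℝ) : qfun θ φ u v = 1 + qPartial 0 0 θ φ u v := by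
  simp [qfun, qPartial]; ring

theorem qfun_comm (θ φ u v : ℝ) : qfun φ θ u v = qfun θ φ u v := by
  simp only [qfun]; ring

theorem qPartial_swap (i j : ℕ) (θ φ u v : ℝ) : qPartial i j φ θ u v = qPartial j i θ φ u v := by
  simp only [qPartial, add_comm i j]; ring

theorem firstOrder_comm (i j : ℕ) : firstOrder i j = firstOrder j i := by
  simp only [firstOrder, add_comm i j]

theorem firstOrder_le_one (i j : ℕ) : firstOrder i j ≤ 1 := by
  unfold firstOrder; split_ifs <;> norm_num

theorem firstOrder_succ_left {i j : ℕ} (hij : 1 ≤ i + j) : firstOrder (i + 1) j = 0 :=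
  if_neg (by omega)

theorem hasDerivAt_qPartial_theta (i j : ℕ) (θ φ u v : ℝ) :
    HasDerivAt (fun θ' => qPartial i j θ' φ u v) (qPartial (i + 1) j θ φ u v) θ := by
  have hx := ((hasDerivAt_id' θ).div_const 2).add_const ((i : ℝ) * (π / 2))
  have h := (((hx.sin.const_mul u).mul_const (sin (φ / 2 + j * (π / 2)))).fun_add
    ((hx.cos.const_mul v).mul_const (cos (φ / 2 + j * (π / 2))))).const_mul (-(1 / 2 : ℝ) ^ (i + j))
  refine h.congr_deriv ?_
  simp only [qPartial, Nat.cast_add, Nat.cast_one, add_mul, one_mul, ← add_assoc,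
    sin_add_pi_div_two, cos_add_pi_div_two, pow_succ, add_right_comm i 1 j]
  ring

theorem hasDerivAt_qfun_theta (θ φ u v : ℝ) :
    HasDerivAt (fun θ' => qfun θ' φ u v) (qPartial 1 0 θ φ u v) θ := by
  simp only [qfun_eq_one_add_qPartial]
  exact (hasDerivAt_qPartial_theta 0 0 θ φ u v).const_add 1

section qfun

variable {θ φ u v : ℝ}

theorem sq_one_sub_qfun_add_sq_qPartial_le (hu : |u| ≤ 1) (hv : |v| ≤ 1) :
    (1 - qfun θ φ u v) ^ 2 + (2 * qPartial 1 0 θ φ u v) ^ 2 ≤ 1 := by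
  have key : (1 - qfun θ φ u v) ^ 2 + (2 * qPartial 1 0 θ φ u v) ^ 2 =
      u ^ 2 * sin (φ / 2) ^ 2 + v ^ 2 * cos (φ / 2) ^ 2 := by
    simp only [qfun, qPartial, Nat.cast_one, Nat.cast_zero, one_mul, zero_mul, add_zero,
      sin_add_pi_div_two, cos_add_pi_div_two]
    linear_combination
      (u ^ 2 * sin (φ / 2) ^ 2 + v ^ 2 * cos (φ / 2) ^ 2) * sin_sq_add_cos_sq (θ / 2)
  have hu2 : u ^ 2 ≤ 1 := by nlinarith [abs_nonneg u, sq_abs u]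
  have hv2 : v ^ 2 ≤ 1 := by nlinarith [abs_nonneg v, sq_abs v]
  rw [key, ← sin_sq_add_cos_sq (φ / 2)]
  gcongr <;> nlinarith [sq_nonneg (sin (φ / 2)), sq_nonneg (cos (φ / 2))]

theorem qfun_nonneg (hu : |u| ≤ 1) (hv : |v| ≤ 1) : 0 ≤ qfun θ φ u v := by
  nlinarith [sq_one_sub_qfun_add_sq_qPartial_le (θ := θ) (φ := φ) hu hv,
    sq_nonneg (2 * qPartial 1 0 θ φ u v)]

theorem qfun_le_two (hu : |u| ≤ 1) (hv : |v| ≤ 1) : qfun θ φ u v ≤ 2 := by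
  nlinarith [sq_one_sub_qfun_add_sq_qPartial_le (θ := θ) (φ := φ) hu hv,
    sq_nonneg (2 * qPartial 1 0 θ φ u v)]

/-- With `P = 1 - q` and `Q = 2 ∂_θ q` one has `P² + Q² ≤ 1`, so `Q² ≤ (1 - P)(1 + P) ≤ 2q`. -/
theorem sq_qPartial_one_zero_le (hu : |u| ≤ 1) (hv : |v| ≤ 1) :
    qPartial 1 0 θ φ u v ^ 2 ≤ qfun θ φ u v := by
  nlinarith [sq_one_sub_qfun_add_sq_qPartial_le (θ := θ) (φ := φ) hu hv,
    qfun_nonneg (θ := θ) (φ := φ) hu hv, qfun_le_two (θ := θ) (φ := φ) hu hv]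

theorem abs_qPartial_le_one (hu : |u| ≤ 1) (hv : |v| ≤ 1) {i j : ℕ} (hij : 1 ≤ i + j) :
    |qPartial i j θ φ u v| ≤ 1 := by
  set x := θ / 2 + i * (π / 2)
  set y := φ / 2 + j * (π / 2)
  have hsin : |u * sin x * sin y| ≤ 1 := by
    rw [abs_mul, abs_mul]
    exact mul_le_one₀ (mul_le_one₀ hu (abs_nonneg _) (abs_sin_le_one x)) (abs_nonneg _)
      (abs_sin_le_one y)
  have hcos : |v * cos x * cos y| ≤ 1 := by
    rw [abs_mul, abs_mul]
    exact mul_le_one₀ (mul_le_one₀ hv (abs_nonneg _) (abs_cos_le_one x)) (abs_nonneg _)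
      (abs_cos_le_one y)
  calc |qPartial i j θ φ u v| = (1 / 2) ^ (i + j) * |u * sin x * sin y + v * cos x * cos y| := by
        rw [qPartial, abs_mul, abs_neg, abs_of_pos (by positivity)]
    _ ≤ 1 / 2 * (1 + 1) :=
        mul_le_mul (pow_le_of_le_one (by norm_num) (by norm_num) (by omega))
          ((abs_add_le _ _).trans (add_le_add hsin hcos)) (abs_nonneg _) (by norm_num)
    _ = 1 := by norm_num

theorem abs_qPartial_le_sqrt_qfun (hu : |u| ≤ 1) (hv : |v| ≤ 1) {i j : ℕ} (hij : i + j = 1) :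
    |qPartial i j θ φ u v| ≤ √(qfun θ φ u v) := by
  obtain ⟨rfl, rfl⟩ | ⟨rfl, rfl⟩ : (i = 1 ∧ j = 0) ∨ (i = 0 ∧ j = 1) := by omega
  · exact abs_le_sqrt (sq_qPartial_one_zero_le hu hv)
  · rw [← qPartial_swap, ← qfun_comm]
    exact abs_le_sqrt (sq_qPartial_one_zero_le hu hv)

end qfun

noncomputable def denom (t θ φ u v : ℝ) : ℝ := cosh (t / 2) - 1 + qfun θ φ u v

theorem denom_comm (t θ φ u v : ℝ) : denom t φ θ u v = denom t θ φ u v := by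
  rw [denom, denom, qfun_comm]

theorem hasDerivAt_denom_t (t θ φ u v : ℝ) :
    HasDerivAt (fun t' => denom t' θ φ u v) (sinh (t / 2) / 2) t := by
  have h := (((hasDerivAt_id' t).div_const 2).cosh.sub_const 1).add_const (qfun θ φ u v)
  exact h.congr_deriv (by ring)

theorem hasDerivAt_denom_theta (t θ φ u v : ℝ) :
    HasDerivAt (fun θ' => denom t θ' φ u v) (qPartial 1 0 θ φ u v) θ :=
  (hasDerivAt_qfun_theta θ φ u v).const_add (cosh (t / 2) - 1)

section denom

variable {t θ φ u v : ℝ}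

theorem qfun_le_denom (θ φ u v : ℝ) : qfun θ φ u v ≤ denom t θ φ u v := by
  have := one_le_cosh (t / 2); rw [denom]; linarith

theorem denom_nonneg (hu : |u| ≤ 1) (hv : |v| ≤ 1) : 0 ≤ denom t θ φ u v :=
  (qfun_nonneg hu hv).trans (qfun_le_denom θ φ u v)

theorem denom_pos (hu : |u| ≤ 1) (hv : |v| ≤ 1) (ht : 0 < t) : 0 < denom t θ φ u v := by
  have := one_lt_cosh.mpr (half_pos ht).ne'
  have := qfun_nonneg (θ := θ) (φ := φ) hu hv
  rw [denom]; linarith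

theorem sq_add_qfun_le_eight_mul_denom (hu : |u| ≤ 1) (hv : |v| ≤ 1) (ht : 0 ≤ t) :
    t ^ 2 + qfun θ φ u v ≤ 8 * denom t θ φ u v := by
  have := sq_div_eight_le_cosh_half_sub_one ht
  have := qfun_nonneg (θ := θ) (φ := φ) hu hv
  rw [denom]; linarith

theorem denom_le_four (hu : |u| ≤ 1) (hv : |v| ≤ 1) (ht : |t| ≤ 2) : denom t θ φ u v ≤ 4 := by
  have := cosh_half_le_three ht
  have := qfun_le_two (θ := θ) (φ := φ) hu hv
  rw [denom]; linarith

theorem sinh_half_sq_le_four_mul_denom (hu : |u| ≤ 1) (hv : |v| ≤ 1) (ht : |t| ≤ 2) :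
    sinh (t / 2) ^ 2 ≤ 4 * denom t θ φ u v := by
  have := cosh_half_le_three ht
  have := one_le_cosh (t / 2)
  have := qfun_nonneg (θ := θ) (φ := φ) hu hv
  rw [sinh_sq, denom]; nlinarith

theorem exp_mul_le_denom (hu : |u| ≤ 1) (hv : |v| ≤ 1) (ht : 1 ≤ t) :
    (1 - exp (-(1 / 2))) ^ 2 / 2 * exp (t / 2) ≤ denom t θ φ u v := by
  have hexp : exp (-(t / 2)) ≤ exp (-(1 / 2)) := exp_le_exp.mpr (by linarith)
  have h1 : 0 ≤ 1 - exp (-(1 / 2)) := by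
    have := exp_le_one_iff.mpr (by norm_num : -(1 / 2 : ℝ) ≤ 0); linarith
  have := qfun_nonneg (θ := θ) (φ := φ) hu hv
  have hsq : (1 - exp (-(1 / 2))) ^ 2 ≤ (1 - exp (-(t / 2))) ^ 2 := by gcongr
  rw [denom, cosh_sub_one_eq_exp_mul_sq]
  nlinarith [exp_pos (t / 2)]

theorem denom_rpow_le (hu : |u| ≤ 1) (hv : |v| ≤ 1) (ht : 0 < t) {Y : ℝ} (hY : Y ≤ 0) :
    denom t θ φ u v ^ Y ≤ 8 ^ (-Y) * (t ^ 2 + qfun θ φ u v) ^ Y := by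
  have hq := qfun_nonneg (θ := θ) (φ := φ) hu hv
  calc denom t θ φ u v ^ Y ≤ ((t ^ 2 + qfun θ φ u v) / 8) ^ Y :=
        rpow_le_rpow_of_nonpos (by positivity)
          (by linarith [sq_add_qfun_le_eight_mul_denom (θ := θ) (φ := φ) hu hv ht.le]) hY
    _ = 8 ^ (-Y) * (t ^ 2 + qfun θ φ u v) ^ Y := by
        rw [div_rpow (by positivity) (by norm_num), rpow_neg (by norm_num), div_eq_inv_mul]

theorem abs_qPartial_le_denom_rpow (hu : |u| ≤ 1) (hv : |v| ≤ 1) {i j : ℕ}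
    (hij : 1 ≤ i + j) :
    |qPartial i j θ φ u v| ≤ denom t θ φ u v ^ ((firstOrder i j : ℝ) / 2) := by
  by_cases h1 : i + j = 1
  · rw [firstOrder, if_pos h1, Int.cast_one, ← sqrt_eq_rpow]
    exact (abs_qPartial_le_sqrt_qfun hu hv h1).trans (sqrt_le_sqrt (qfun_le_denom θ φ u v))
  · rw [firstOrder, if_neg h1, Int.cast_zero, zero_div, rpow_zero]
    exact abs_qPartial_le_one hu hv hij

end denom

noncomputable def psiMonomial (γ c : ℝ) (a b k : ℕ) (t θ φ u v : ℝ) : ℝ :=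
  c * cosh (t / 2) ^ a * sinh (t / 2) ^ b * denom t θ φ u v ^ (-γ - k)

theorem psiMonomial_comm (γ c : ℝ) (a b k : ℕ) (t θ φ u v : ℝ) :
    psiMonomial γ c a b k t φ θ u v = psiMonomial γ c a b k t θ φ u v := by
  rw [psiMonomial, psiMonomial, denom_comm]

theorem psiMonomial_zero_coeff (γ : ℝ) (a b k : ℕ) : psiMonomial γ 0 a b k = 0 := by
  funext t θ φ u v; simp [psiMonomial]

section psiMonomial

variable {γ c : ℝ} {a b k : ℕ} {t θ φ u v : ℝ}

theorem hasDerivAt_psiMonomial_t (hu : |u| ≤ 1) (hv : |v| ≤ 1) (ht : 0 < t) :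
    HasDerivAt (fun t' => psiMonomial γ c a b k t' θ φ u v)
      (psiMonomial γ (c * a / 2) (a - 1) (b + 1) k t θ φ u v +
        psiMonomial γ (c * b / 2) (a + 1) (b - 1) k t θ φ u v +
        psiMonomial γ (c * (-γ - k) / 2) a (b + 1) (k + 1) t θ φ u v) t := by
  have hx := (hasDerivAt_id' t).div_const 2
  have hD := (hasDerivAt_denom_t t θ φ u v).rpow_const (p := -γ - k)
    (Or.inl (denom_pos hu hv ht).ne')
  have h := (((hx.cosh.fun_pow a).const_mul c).fun_mul (hx.sinh.fun_pow b)).fun_mul hD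
  refine h.congr_deriv ?_
  simp only [psiMonomial, rpow_neg_sub_succ]
  ring

theorem hasDerivAt_psiMonomial_theta (hu : |u| ≤ 1) (hv : |v| ≤ 1) (ht : 0 < t) :
    HasDerivAt (fun θ' => psiMonomial γ c a b k t θ' φ u v)
      (qPartial 1 0 θ φ u v * psiMonomial γ (c * (-γ - k)) a b (k + 1) t θ φ u v) θ := by
  have hD := (hasDerivAt_denom_theta t θ φ u v).rpow_const (p := -γ - k)
    (Or.inl (denom_pos hu hv ht).ne')
  refine (hD.const_mul (c * cosh (t / 2) ^ a * sinh (t / 2) ^ b)).congr_deriv ?_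
  simp only [psiMonomial, rpow_neg_sub_succ]
  ring

theorem abs_psiMonomial_le_of_abs_le_two (hu : |u| ≤ 1) (hv : |v| ≤ 1) (ht0 : 0 < t)
    (ht : |t| ≤ 2) :
    |psiMonomial γ c a b k t θ φ u v| ≤
      |c| * 3 ^ a * 2 ^ b * denom t θ φ u v ^ ((b : ℝ) / 2 - γ - k) := by
  have hD := denom_pos (θ := θ) (φ := φ) hu hv ht0
  have hC : |cosh (t / 2)| ≤ 3 := by rw [abs_of_pos (cosh_pos _)]; exact cosh_half_le_three ht
  have hS : |sinh (t / 2)| ≤ 2 * √(denom t θ φ u v) := by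
    have h := abs_le_sqrt (sinh_half_sq_le_four_mul_denom (θ := θ) (φ := φ) hu hv ht)
    rwa [sqrt_mul (by norm_num), show (4 : ℝ) = 2 ^ 2 by norm_num, sqrt_sq (by norm_num)] at h
  calc |psiMonomial γ c a b k t θ φ u v|
      = |c| * |cosh (t / 2)| ^ a * |sinh (t / 2)| ^ b * denom t θ φ u v ^ (-γ - k) := by
        simp only [psiMonomial, abs_mul, abs_pow, abs_of_pos (rpow_pos_of_pos hD _)]
    _ ≤ |c| * 3 ^ a * (2 * √(denom t θ φ u v)) ^ b * denom t θ φ u v ^ (-γ - k) := by gcongr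
    _ = |c| * 3 ^ a * 2 ^ b * denom t θ φ u v ^ ((b : ℝ) / 2 - γ - k) := by
        rw [mul_pow, ← rpow_natCast √_, ← rpow_div_two_eq_sqrt _ hD.le, sub_sub,
          sub_eq_add_neg _ (γ + k), rpow_add hD, neg_add']
        ring

theorem abs_psiMonomial_le_of_one_le (hu : |u| ≤ 1) (hv : |v| ≤ 1) (hγ : 0 ≤ γ) (ht : 1 ≤ t) :
    |psiMonomial γ c a b k t θ φ u v| ≤ |c| * ((1 - exp (-(1 / 2))) ^ 2 / 2) ^ (-γ - k) *
      exp (t / 2 * (a + b - γ - k)) := by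
  set κ := (1 - exp (-(1 / 2))) ^ 2 / 2
  have hκ : 0 < κ := by
    have := exp_lt_one_iff.mpr (by norm_num : -(1 / 2 : ℝ) < 0)
    positivity
  have hD := denom_pos (t := t) (θ := θ) (φ := φ) hu hv (by linarith)
  have hS0 : 0 ≤ sinh (t / 2) := sinh_nonneg_iff.mpr (by linarith)
  have hC : cosh (t / 2) ≤ exp (t / 2) := by rw [← cosh_add_sinh]; linarith
  have hS : sinh (t / 2) ≤ exp (t / 2) := (sinh_lt_cosh _).le.trans hC
  have hDpow : denom t θ φ u v ^ (-γ - k) ≤ (κ * exp (t / 2)) ^ (-γ - k) :=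
    rpow_le_rpow_of_nonpos (by positivity) (exp_mul_le_denom hu hv ht)
      (by have := k.cast_nonneg (α := ℝ); linarith)
  calc |psiMonomial γ c a b k t θ φ u v|
      = |c| * cosh (t / 2) ^ a * sinh (t / 2) ^ b * denom t θ φ u v ^ (-γ - k) := by
        simp only [psiMonomial, abs_mul, abs_pow, abs_of_pos (rpow_pos_of_pos hD _),
          abs_of_pos (cosh_pos _), abs_of_nonneg hS0]
    _ ≤ |c| * exp (t / 2) ^ a * exp (t / 2) ^ b * (κ * exp (t / 2)) ^ (-γ - k) := by gcongr
    _ = |c| * κ ^ (-γ - k) * exp (t / 2 * (a + b - γ - k)) := by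
        rw [mul_rpow hκ.le (exp_pos _).le, ← exp_mul, ← exp_nat_mul, ← exp_nat_mul]
        rw [show t / 2 * (a + b - γ - k) = a * (t / 2) + b * (t / 2) + t / 2 * (-γ - k) by ring,
          exp_add, exp_add]
        ring

end psiMonomial

/-- Finite sums of products `qPartial i₁ j₁ ⋯ qPartial iₙ jₙ * psiMonomial γ c a b k` with all
`iₗ + jₗ ≥ 1`. The weight `w` records that each term is `O(denom ^ (w / 2 - γ))` for small `t`,
the slack `s` that `a + b ≤ k + s` in each monomial; factors `qPartial` only multiply sums of
slack `0`. -/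
inductive Admissible (γ : ℝ) : ℤ → ℕ → (ℝ → ℝ → ℝ → ℝ → ℝ → ℝ) → Prop
  | zero {w : ℤ} {s : ℕ} : Admissible γ w s 0
  | add {w : ℤ} {s : ℕ} {f g : ℝ → ℝ → ℝ → ℝ → ℝ → ℝ} :
      Admissible γ w s f → Admissible γ w s g → Admissible γ w s (f + g)
  | monomial {w : ℤ} {s : ℕ} (c : ℝ) (a b k : ℕ) (hw : w ≤ b - 2 * k) (hs : a + b ≤ k + s) :
      Admissible γ w s (psiMonomial γ c a b k)
  | mulQPartial {w w' : ℤ} {s : ℕ} {f : ℝ → ℝ → ℝ → ℝ → ℝ → ℝ} (i j : ℕ) (hij : 1 ≤ i + j)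
      (hf : Admissible γ w' 0 f) (hw : w ≤ w' + firstOrder i j) :
      Admissible γ w s (fun t θ φ u v => qPartial i j θ φ u v * f t θ φ u v)

namespace Admissible

variable {γ : ℝ} {w : ℤ} {s : ℕ} {f : ℝ → ℝ → ℝ → ℝ → ℝ → ℝ}

theorem mono_slack (h : Admissible γ w s f) {s' : ℕ} (hs : s ≤ s') : Admissible γ w s' f := by
  induction h with
  | zero => exact .zero
  | add _ _ ihf ihg => exact .add (ihf hs) (ihg hs)
  | monomial c a b k hw hs' => exact .monomial c a b k hw (by omega)
  | mulQPartial i j hij hf hw => exact .mulQPartial i j hij hf hw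

theorem swap (h : Admissible γ w s f) : Admissible γ w s (fun t θ φ u v => f t φ θ u v) := by
  induction h with
  | zero => exact .zero
  | add _ _ ihf ihg => exact .add ihf ihg
  | monomial c a b k hw hs =>
    simpa only [psiMonomial_comm] using Admissible.monomial (γ := γ) c a b k hw hs
  | @mulQPartial w w' s f i j hij _ hw ih =>
    have e : (fun t θ φ u v => qPartial i j φ θ u v * f t φ θ u v) =
        fun t θ φ u v => qPartial j i θ φ u v * f t φ θ u v := by
      funext t θ φ u v; rw [qPartial_swap]
    rw [e]
    exact .mulQPartial j i (by omega) ih (by rwa [firstOrder_comm])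

/-- In a `t`-derivative the exponents `a - 1`, `b - 1` truncate at `0` exactly when the
coefficient `c * n / 2` vanishes. -/
theorem monomial_natCast_mul (c : ℝ) {n a b k : ℕ} (hw : w ≤ b - 2 * k)
    (hs : n ≠ 0 → a + b ≤ k + s) : Admissible γ w s (psiMonomial γ (c * n / 2) a b k) := by
  rcases eq_or_ne n 0 with rfl | hn
  · simpa [psiMonomial_zero_coeff] using (Admissible.zero : Admissible γ w s 0)
  · exact .monomial _ a b k hw (hs hn)

theorem exists_hasDerivAt_t (h : Admissible γ w s f) :
    ∃ g, Admissible γ (w - 1) s g ∧ ∀ t θ φ u v : ℝ, |u| ≤ 1 → |v| ≤ 1 → 0 < t →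
      HasDerivAt (fun t' => f t' θ φ u v) (g t θ φ u v) t := by
  induction h with
  | zero => exact ⟨0, .zero, fun t θ φ u v _ _ _ => hasDerivAt_const t 0⟩
  | add _ _ ihf ihg =>
    obtain ⟨f', hf', hdf⟩ := ihf
    obtain ⟨g', hg', hdg⟩ := ihg
    exact ⟨f' + g', .add hf' hg',
      fun t θ φ u v hu hv ht => (hdf t θ φ u v hu hv ht).add (hdg t θ φ u v hu hv ht)⟩
  | monomial c a b k hw hs =>
    refine ⟨psiMonomial γ (c * a / 2) (a - 1) (b + 1) k +
        psiMonomial γ (c * b / 2) (a + 1) (b - 1) k +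
        psiMonomial γ (c * (-γ - k) / 2) a (b + 1) (k + 1),
      .add (.add (monomial_natCast_mul c (by push_cast; omega) (by omega))
        (monomial_natCast_mul c (by omega) (by omega)))
        (.monomial _ a (b + 1) (k + 1) (by push_cast; omega) (by omega)),
      fun t θ φ u v hu hv ht => hasDerivAt_psiMonomial_t hu hv ht⟩
  | mulQPartial i j hij _ hw ih =>
    obtain ⟨f', hf', hdf⟩ := ih
    exact ⟨fun t θ φ u v => qPartial i j θ φ u v * f' t θ φ u v,
      .mulQPartial i j hij hf' (by omega),
      fun t θ φ u v hu hv ht => (hdf t θ φ u v hu hv ht).const_mul _⟩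

theorem exists_hasDerivAt_theta (h : Admissible γ w s f) (hs : s ≤ 1) :
    ∃ g, Admissible γ (w - 1) 0 g ∧ ∀ t θ φ u v : ℝ, |u| ≤ 1 → |v| ≤ 1 → 0 < t →
      HasDerivAt (fun θ' => f t θ' φ u v) (g t θ φ u v) θ := by
  induction h with
  | zero => exact ⟨0, .zero, fun t θ φ u v _ _ _ => hasDerivAt_const θ 0⟩
  | add _ _ ihf ihg =>
    obtain ⟨f', hf', hdf⟩ := ihf hs
    obtain ⟨g', hg', hdg⟩ := ihg hs
    exact ⟨f' + g', .add hf' hg',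
      fun t θ φ u v hu hv ht => (hdf t θ φ u v hu hv ht).add (hdg t θ φ u v hu hv ht)⟩
  | @monomial w s c a b k hw hs' =>
    refine ⟨fun t θ φ u v =>
        qPartial 1 0 θ φ u v * psiMonomial γ (c * (-γ - k)) a b (k + 1) t θ φ u v,
      .mulQPartial (w' := w - 2) 1 0 le_rfl
        (.monomial _ a b (k + 1) (by push_cast; omega) (by omega)) (by simp [firstOrder]; omega),
      fun t θ φ u v hu hv ht => hasDerivAt_psiMonomial_theta hu hv ht⟩
  | @mulQPartial w w' s f i j hij hf hw ih =>
    obtain ⟨f', hf', hdf⟩ := ih zero_le_one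
    have := firstOrder_le_one i j
    refine ⟨fun t θ φ u v => qPartial (i + 1) j θ φ u v * f t θ φ u v +
        qPartial i j θ φ u v * f' t θ φ u v,
      .add (.mulQPartial (i + 1) j (by omega) hf (by rw [firstOrder_succ_left hij]; omega))
        (.mulQPartial i j hij hf' (by omega)),
      fun t θ φ u v hu hv ht =>
        (hasDerivAt_qPartial_theta i j θ φ u v).fun_mul (hdf t θ φ u v hu hv ht)⟩

theorem exists_hasDerivAt_phi (h : Admissible γ w s f) (hs : s ≤ 1) :
    ∃ g, Admissible γ (w - 1) 0 g ∧ ∀ t θ φ u v : ℝ, |u| ≤ 1 → |v| ≤ 1 → 0 < t →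
      HasDerivAt (fun φ' => f t θ φ' u v) (g t θ φ u v) φ := by
  obtain ⟨g, hg, hdg⟩ := h.swap.exists_hasDerivAt_theta hs
  exact ⟨fun t θ φ u v => g t φ θ u v, hg.swap, fun t θ φ u v hu hv ht => hdg t φ θ u v hu hv ht⟩

theorem exists_abs_le_denom_rpow (h : Admissible γ w s f) :
    ∃ C, 0 ≤ C ∧ ∀ t θ φ u v : ℝ, |u| ≤ 1 → |v| ≤ 1 → 0 < t → |t| ≤ 2 →
      |f t θ φ u v| ≤ C * denom t θ φ u v ^ ((w : ℝ) / 2 - γ) := by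
  induction h with
  | zero => exact ⟨0, le_rfl, fun t θ φ u v _ _ _ _ => by simp⟩
  | @add w s f g _ _ ihf ihg =>
    obtain ⟨C₁, hC₁, hf⟩ := ihf
    obtain ⟨C₂, hC₂, hg⟩ := ihg
    refine ⟨C₁ + C₂, by positivity, fun t θ φ u v hu hv ht0 ht => ?_⟩
    calc |f t θ φ u v + g t θ φ u v| ≤ |f t θ φ u v| + |g t θ φ u v| := abs_add_le _ _
      _ ≤ _ := add_le_add (hf t θ φ u v hu hv ht0 ht) (hg t θ φ u v hu hv ht0 ht)
      _ = _ := by ring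
  | @monomial w s c a b k hw hs =>
    have hYX : (w : ℝ) / 2 - γ ≤ (b : ℝ) / 2 - γ - k := by
      have : (w : ℝ) ≤ b - 2 * k := by exact_mod_cast hw
      linarith
    refine ⟨|c| * 3 ^ a * 2 ^ b * 4 ^ (((b : ℝ) / 2 - γ - k) - ((w : ℝ) / 2 - γ)), by positivity,
      fun t θ φ u v hu hv ht0 ht => ?_⟩
    have hD := denom_pos (t := t) (θ := θ) (φ := φ) hu hv ht0
    calc |psiMonomial γ c a b k t θ φ u v|
        ≤ |c| * 3 ^ a * 2 ^ b * denom t θ φ u v ^ ((b : ℝ) / 2 - γ - k) :=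
          abs_psiMonomial_le_of_abs_le_two hu hv ht0 ht
      _ ≤ |c| * 3 ^ a * 2 ^ b * (4 ^ (((b : ℝ) / 2 - γ - k) - ((w : ℝ) / 2 - γ)) *
            denom t θ φ u v ^ ((w : ℝ) / 2 - γ)) := by
          gcongr; exact rpow_le_rpow_sub_mul_rpow hD (denom_le_four hu hv ht) hYX
      _ = _ := by ring
  | @mulQPartial w w' s f i j hij _ hw ih =>
    obtain ⟨C, hC, hf⟩ := ih
    have hYX : (w : ℝ) / 2 - γ ≤ ((w' : ℝ) + firstOrder i j) / 2 - γ := by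
      have : (w : ℝ) ≤ w' + firstOrder i j := by exact_mod_cast hw
      linarith
    refine ⟨C * 4 ^ ((((w' : ℝ) + firstOrder i j) / 2 - γ) - ((w : ℝ) / 2 - γ)), by positivity,
      fun t θ φ u v hu hv ht0 ht => ?_⟩
    have hD := denom_pos (t := t) (θ := θ) (φ := φ) hu hv ht0
    calc |qPartial i j θ φ u v * f t θ φ u v|
        = |qPartial i j θ φ u v| * |f t θ φ u v| := abs_mul _ _
      _ ≤ denom t θ φ u v ^ ((firstOrder i j : ℝ) / 2) *
            (C * denom t θ φ u v ^ ((w' : ℝ) / 2 - γ)) := by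
          gcongr
          · exact abs_qPartial_le_denom_rpow hu hv hij
          · exact hf t θ φ u v hu hv ht0 ht
      _ = C * denom t θ φ u v ^ (((w' : ℝ) + firstOrder i j) / 2 - γ) := by
          rw [mul_left_comm, ← rpow_add hD]; ring_nf
      _ ≤ C * (4 ^ ((((w' : ℝ) + firstOrder i j) / 2 - γ) - ((w : ℝ) / 2 - γ)) *
            denom t θ φ u v ^ ((w : ℝ) / 2 - γ)) := by
          gcongr; exact rpow_le_rpow_sub_mul_rpow hD (denom_le_four hu hv ht) hYX
      _ = _ := by ring

theorem exists_abs_le_exp (h : Admissible γ w s f) (hγ : 0 ≤ γ) :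
    ∃ C, 0 ≤ C ∧ ∀ t θ φ u v : ℝ, |u| ≤ 1 → |v| ≤ 1 → 1 ≤ t →
      |f t θ φ u v| ≤ C * exp (t / 2 * (s - γ)) := by
  induction h with
  | zero => exact ⟨0, le_rfl, fun t θ φ u v _ _ _ => by simp⟩
  | @add w s f g _ _ ihf ihg =>
    obtain ⟨C₁, hC₁, hf⟩ := ihf
    obtain ⟨C₂, hC₂, hg⟩ := ihg
    refine ⟨C₁ + C₂, by positivity, fun t θ φ u v hu hv ht => ?_⟩
    calc |f t θ φ u v + g t θ φ u v| ≤ |f t θ φ u v| + |g t θ φ u v| := abs_add_le _ _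
      _ ≤ _ := add_le_add (hf t θ φ u v hu hv ht) (hg t θ φ u v hu hv ht)
      _ = _ := by ring
  | @monomial w s c a b k hw hs =>
    refine ⟨|c| * ((1 - exp (-(1 / 2))) ^ 2 / 2) ^ (-γ - k), by positivity,
      fun t θ φ u v hu hv ht => ?_⟩
    have hs' : (a : ℝ) + b - k ≤ s := by
      have : ((a + b : ℕ) : ℝ) ≤ (k + s : ℕ) := by exact_mod_cast hs
      push_cast at this; linarith
    refine (abs_psiMonomial_le_of_one_le hu hv hγ ht).trans
      (mul_le_mul_of_nonneg_left (exp_le_exp.mpr ?_) (by positivity))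
    nlinarith
  | @mulQPartial w w' s f i j hij _ hw ih =>
    obtain ⟨C, hC, hf⟩ := ih
    refine ⟨C, hC, fun t θ φ u v hu hv ht => ?_⟩
    calc |qPartial i j θ φ u v * f t θ φ u v|
        = |qPartial i j θ φ u v| * |f t θ φ u v| := abs_mul _ _
      _ ≤ 1 * (C * exp (t / 2 * ((0 : ℕ) - γ))) := by
          gcongr
          · exact abs_qPartial_le_one hu hv hij
          · exact hf t θ φ u v hu hv ht
      _ ≤ C * exp (t / 2 * (s - γ)) := by
          rw [one_mul]; gcongr; positivity

theorem exists_iteratedDeriv_t (h : Admissible γ w s f) (m : ℕ) :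
    ∃ g, Admissible γ (w - m) s g ∧ ∀ t θ φ u v : ℝ, |u| ≤ 1 → |v| ≤ 1 → 0 < t →
      iteratedDeriv m (fun t' => f t' θ φ u v) t = g t θ φ u v := by
  induction m with
  | zero => exact ⟨f, by simpa using h, fun _ _ _ _ _ _ _ _ => by rw [iteratedDeriv_zero]⟩
  | succ m ih =>
    obtain ⟨g, hg, hfg⟩ := ih
    obtain ⟨g', hg', hdg⟩ := hg.exists_hasDerivAt_t
    refine ⟨g', by rwa [Nat.cast_succ, ← sub_sub], fun t θ φ u v hu hv ht => ?_⟩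
    have hloc : iteratedDeriv m (fun t' => f t' θ φ u v) =ᶠ[nhds t] fun t' => g t' θ φ u v :=
      (eventually_gt_nhds ht).mono fun t' ht' => hfg t' θ φ u v hu hv ht'
    rw [iteratedDeriv_succ, hloc.deriv_eq]
    exact (hdg t θ φ u v hu hv ht).deriv

theorem exists_iteratedDeriv_theta (h : Admissible γ w s f) (hs : s ≤ 1) (n : ℕ) :
    ∃ g, Admissible γ (w - n) s g ∧ ∀ t θ φ u v : ℝ, |u| ≤ 1 → |v| ≤ 1 → 0 < t →
      iteratedDeriv n (fun θ' => f t θ' φ u v) θ = g t θ φ u v := by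
  induction n with
  | zero => exact ⟨f, by simpa using h, fun _ _ _ _ _ _ _ _ => by rw [iteratedDeriv_zero]⟩
  | succ n ih =>
    obtain ⟨g, hg, hfg⟩ := ih
    obtain ⟨g', hg', hdg⟩ := hg.exists_hasDerivAt_theta hs
    refine ⟨g', by rw [Nat.cast_succ, ← sub_sub]; exact hg'.mono_slack (Nat.zero_le s),
      fun t θ φ u v hu hv ht => ?_⟩
    have hfun : iteratedDeriv n (fun θ' => f t θ' φ u v) = fun θ' => g t θ' φ u v :=
      funext fun θ' => hfg t θ' φ u v hu hv ht
    rw [iteratedDeriv_succ, hfun]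
    exact (hdg t θ φ u v hu hv ht).deriv

end Admissible

theorem Psi_qfun_eq_psiMonomial (α β : ℝ) {u v : ℝ} (hu : |u| ≤ 1) (hv : |v| ≤ 1) (t θ φ : ℝ) :
    Psi α β t (qfun θ φ u v) = psiMonomial (α + β + 2) 1 0 1 0 t θ φ u v := by
  rw [Psi, psiMonomial, ← denom, Nat.cast_zero, sub_zero, rpow_neg (denom_nonneg hu hv),
    div_eq_mul_inv]
  ring

theorem exists_admissible_deriv_iteratedDeriv_Psi (α β : ℝ) (m n : ℕ) :
    ∃ f, Admissible (α + β + 2) (-(m + n)) 0 f ∧ ∀ t θ φ u v : ℝ, |u| ≤ 1 → |v| ≤ 1 → 0 < t →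
      deriv (fun φ' => iteratedDeriv n
        (fun θ' => iteratedDeriv m (fun t' => Psi α β t' (qfun θ' φ' u v)) t) θ) φ =
        f t θ φ u v := by
  have hΨ : Admissible (α + β + 2) 1 1 (psiMonomial (α + β + 2) 1 0 1 0) :=
    .monomial 1 0 1 0 (by norm_num) le_rfl
  obtain ⟨f₁, hf₁, hd₁⟩ := hΨ.exists_iteratedDeriv_t m
  obtain ⟨f₂, hf₂, hd₂⟩ := hf₁.exists_iteratedDeriv_theta le_rfl n
  obtain ⟨f₃, hf₃, hd₃⟩ := hf₂.exists_hasDerivAt_phi le_rfl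
  refine ⟨f₃, by convert hf₃ using 2; ring, fun t θ φ u v hu hv ht => ?_⟩
  have hfun : (fun φ' => iteratedDeriv n
      (fun θ' => iteratedDeriv m (fun t' => Psi α β t' (qfun θ' φ' u v)) t) θ) =
      fun φ' => f₂ t θ φ' u v := by
    funext φ'
    rw [← hd₂ t θ φ' u v hu hv ht]
    congr 1
    funext θ'
    rw [← hd₁ t θ' φ' u v hu hv ht]
    simp only [Psi_qfun_eq_psiMonomial α β hu hv]
  rw [hfun]
  exact (hd₃ t θ φ u v hu hv ht).deriv

end PsiBound

/-- Lemma 4.8 in [NoSjogren], second estimate. -/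
theorem Psi_derivative_bounds_phi (α β : ℝ) (hα : -(1 / 2) ≤ α) (hβ : -(1 / 2) ≤ β) (m n : ℕ) :
    ∃ C : ℝ, 0 < C ∧
      ∀ θ ∈ Ioo (0 : ℝ) π, ∀ φ ∈ Ioo (0 : ℝ) π,
        ∀ u ∈ Icc (-1 : ℝ) 1, ∀ v ∈ Icc (-1 : ℝ) 1, ∀ t : ℝ, 0 < t →
          (t ≤ 1 →
            |deriv (fun φ' =>
                iteratedDeriv n
                  (fun θ' => iteratedDeriv m (fun t' => Psi α β t' (qfun θ' φ' u v)) t) θ) φ|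
              ≤ C * (t ^ 2 + qfun θ φ u v) ^
                  (-(α + β + 2) - ((m : ℝ) + (n : ℝ)) / 2)) ∧
          (1 < t →
            |deriv (fun φ' =>
                iteratedDeriv n
                  (fun θ' => iteratedDeriv m (fun t' => Psi α β t' (qfun θ' φ' u v)) t) θ) φ|
              ≤ C * Real.exp (-t / 4)) := by
  obtain ⟨f, hf, hderiv⟩ := PsiBound.exists_admissible_deriv_iteratedDeriv_Psi α β m n
  obtain ⟨C₁, hC₁, hsmall⟩ := hf.exists_abs_le_denom_rpow
  obtain ⟨C₂, hC₂, hlarge⟩ := hf.exists_abs_le_exp (by linarith)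
  set Y := -(α + β + 2) - ((m : ℝ) + (n : ℝ)) / 2 with hYdef
  have hY : ((-(m + n : ℤ) : ℤ) : ℝ) / 2 - (α + β + 2) = Y := by push_cast; ring
  have hY0 : Y ≤ 0 := by
    rw [hYdef]; linarith [m.cast_nonneg (α := ℝ), n.cast_nonneg (α := ℝ)]
  have hC₁' : 0 ≤ C₁ * 8 ^ (-Y) := by positivity
  refine ⟨C₁ * 8 ^ (-Y) + C₂ + 1, by positivity, fun θ _ φ _ u hu v hv t ht => ?_⟩
  have hu' : |u| ≤ 1 := abs_le.mpr hu
  have hv' : |v| ≤ 1 := abs_le.mpr hv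
  rw [hderiv t θ φ u v hu' hv' ht]
  refine ⟨fun ht1 => ?_, fun ht1 => ?_⟩
  · have hq := PsiBound.qfun_nonneg (θ := θ) (φ := φ) hu' hv'
    calc |f t θ φ u v| ≤ C₁ * PsiBound.denom t θ φ u v ^ Y := by
          rw [← hY]; exact hsmall t θ φ u v hu' hv' ht (by rw [abs_of_pos ht]; linarith)
      _ ≤ C₁ * 8 ^ (-Y) * (t ^ 2 + qfun θ φ u v) ^ Y := by
          rw [mul_assoc]; gcongr; exact PsiBound.denom_rpow_le hu' hv' ht hY0
      _ ≤ _ := mul_le_mul_of_nonneg_right (by linarith) (by positivity)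
  · calc |f t θ φ u v| ≤ C₂ * exp (t / 2 * ((0 : ℕ) - (α + β + 2))) :=
          hlarge t θ φ u v hu' hv' ht1.le
      _ ≤ C₂ * exp (-t / 4) := by gcongr; push_cast; nlinarith
      _ ≤ _ := mul_le_mul_of_nonneg_right (by linarith) (exp_pos _).le
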